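/- Decoupled problem: Suppose A = diagonal(a) and B = diagonal(b) with a, b ∈ ℝⁿ and bᵢ ≥ 0 for all i, and cᵢ ≠ 0 for all i. Set ς̄ = ½ Σᵢ bᵢ − α, and for each i let m̄ᵢ = max{ −½(aᵢ + ς̄ bᵢ + cᵢ), −½(aᵢ + ς̄ bᵢ − cᵢ) } and n̄ᵢ = fᵢ + m̄ᵢ. Assume m̄ᵢ > 0 and n̄ᵢ > 0 for all i. Then (ς̄, σ̄₁, σ̄₂) with σ̄₁ᵢ = m̄ᵢ and σ̄₂ᵢ = n̄ᵢ belongs to S⁺♯, is the unique critical point of P^d in S⁺♯ (the unique point of S⁺♯ at which the Fréchet derivative of P^d vanishes), and is a global maximizer of P^d over S⁺♯; moreover, the pair (x̄, v̄) with x̄ᵢ = cᵢ/|cᵢ| and v̄ᵢ = 1 for all i is a global minimizer of P over X_v, and P(x̄,v̄) = P^d(ς̄,σ̄₁,σ̄₂). -/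

import Mathlib

open Matrix BigOperators

/-- `G(ς,σ₁) = A + ς B + 2 diag(σ₁)`. -/
noncomputable def Gm {n : ℕ} (A B : Matrix (Fin n) (Fin n) ℝ) (ς : ℝ) (σ₁ : Fin n → ℝ) :
    Matrix (Fin n) (Fin n) ℝ :=
  A + ς • B + (2 : ℝ) • Matrix.diagonal σ₁

/-- The primal objective `P(x,v)`. -/
noncomputable def Pobj {n : ℕ} (A B : Matrix (Fin n) (Fin n) ℝ) (α : ℝ) (c f : Fin n → ℝ)
    (x v : Fin n → ℝ) : ℝ :=
  (1/2) * (x ⬝ᵥ A.mulVec x) - c ⬝ᵥ x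
    + (1/2) * ((1/2) * (x ⬝ᵥ B.mulVec x) - α)^2 - f ⬝ᵥ v

/-- The primal feasible set `X_v`. -/
def Xv (n : ℕ) : Set ((Fin n → ℝ) × (Fin n → ℝ)) :=
  {p | ∀ i, (p.2 i = 0 ∨ p.2 i = 1) ∧ -p.2 i ≤ p.1 i ∧ p.1 i ≤ p.2 i}

/-- The canonical dual function `P^d(ς,σ₁,σ₂)`. -/
noncomputable def Pd {n : ℕ} (A B : Matrix (Fin n) (Fin n) ℝ) (α : ℝ) (c f : Fin n → ℝ)
    (p : ℝ × (Fin n → ℝ) × (Fin n → ℝ)) : ℝ :=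
  -(1/2) * (c ⬝ᵥ (Gm A B p.1 p.2.1)⁻¹.mulVec c)
    - (1/4) * ∑ i, (f i + p.2.1 i + p.2.2 i)^2 / p.2.2 i
    - (1/2) * p.1^2 - α * p.1

/-- The dual feasible set `S⁺♯`. -/
def Ssharp {n : ℕ} (A B : Matrix (Fin n) (Fin n) ℝ) (α : ℝ) :
    Set (ℝ × (Fin n → ℝ) × (Fin n → ℝ)) :=
  {p | -α ≤ p.1 ∧ (∀ i, 0 ≤ p.2.1 i) ∧ (∀ i, 0 < p.2.2 i) ∧ (Gm A B p.1 p.2.1).PosDef}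

/-!
For diagonal `A` and `B` both problems separate over coordinates, with
`g i = a i + ς b i + 2 σ₁ i`. The elementary bounds `-c²/(2g) ≤ g/2 - |c|` (for `g > 0`) and
`-(t+s)²/(4s) ≤ -t` (for `s > 0`), together with completing the square in `ς`, bound `P^d` on
`S⁺♯` by the constant `decoupledValue`. Dually, `½(y-α)² ≥ ς̄ (y-α) - ½ς̄²` and a coordinatewise
estimate on `X_v` bound `P` from below by the same constant, and both bounds are attained at the
given points. The critical points are read off from the directional derivatives of `P^d`: along
`σ₂ i` and `σ₁ i` they force `σ₂ i = f i + σ₁ i` and `g i = |c i|`, and then along `ς` they force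
`ς = ς̄`.
-/

open Topology

lemma neg_half_mul_sq_div_le {c g : ℝ} (hg : 0 < g) : -(1/2) * (c ^ 2 / g) ≤ g / 2 - |c| := by
  have key : c ^ 2 / g * g = c ^ 2 := div_mul_cancel₀ _ hg.ne'
  nlinarith [sq_nonneg (g - |c|), sq_abs c]

lemma neg_quarter_mul_sq_div_le {t s : ℝ} (hs : 0 < s) : -(1/4) * ((t + s) ^ 2 / s) ≤ -t := by
  have key : (t + s) ^ 2 / s * s = (t + s) ^ 2 := div_mul_cancel₀ _ hs.ne'
  nlinarith [sq_nonneg (t - s)]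

lemma max_neg_half_mul_add_sub (d c : ℝ) :
    max (-(1/2) * (d + c)) (-(1/2) * (d - c)) = (|c| - d) / 2 := by
  rcases le_total c 0 with h | h
  · rw [max_eq_left (by linarith), abs_of_nonpos h]; ring
  · rw [max_eq_right (by linarith), abs_of_nonneg h]; ring

lemma le_primal_term {d c f m x v : ℝ} (hd : d + 2 * m = |c|) (hm : 0 < m) (hfm : 0 < f + m)
    (hv : v = 0 ∨ v = 1) (hxv : -v ≤ x ∧ x ≤ v) :
    d / 2 - |c| - f ≤ d / 2 * x ^ 2 - c * x - f * v := by
  rcases hv with rfl | rfl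
  · obtain rfl : x = 0 := by linarith
    nlinarith [abs_nonneg c]
  · have hcx : c * x ≤ |c| * |x| := by rw [← abs_mul]; exact le_abs_self _
    have hx1 : x ^ 2 ≤ 1 := by nlinarith
    obtain rfl : d = |c| - 2 * m := by linarith
    have hsq : |c| * (|x| - 1) ^ 2 = |c| * x ^ 2 - 2 * (|c| * |x|) + |c| := by
      rw [sub_sq, sq_abs]; ring
    nlinarith [mul_nonneg (abs_nonneg c) (sq_nonneg (|x| - 1)), mul_nonneg hm.le (sub_nonneg.2 hx1)]

lemma dotProduct_diagonal_mulVec_self {ι R : Type*} [Fintype ι] [DecidableEq ι] [CommSemiring R]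
    (d x : ι → R) :
    x ⬝ᵥ diagonal d *ᵥ x = ∑ i, d i * x i ^ 2 := by
  simp only [dotProduct, mulVec_diagonal]
  exact Finset.sum_congr rfl fun i _ => by ring

lemma Gm_diagonal {n : ℕ} (a b : Fin n → ℝ) (ς : ℝ) (σ₁ : Fin n → ℝ) :
    Gm (diagonal a) (diagonal b) ς σ₁ = diagonal fun i => a i + ς * b i + 2 * σ₁ i := by
  simp only [Gm, ← diagonal_smul, diagonal_add]
  rfl

lemma mem_Ssharp_diagonal_iff {n : ℕ} (a b : Fin n → ℝ) (α : ℝ)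
    (p : ℝ × (Fin n → ℝ) × (Fin n → ℝ)) :
    p ∈ Ssharp (diagonal a) (diagonal b) α ↔ -α ≤ p.1 ∧ (∀ i, 0 ≤ p.2.1 i) ∧ (∀ i, 0 < p.2.2 i) ∧
      ∀ i, 0 < a i + p.1 * b i + 2 * p.2.1 i := by
  rw [Ssharp, Set.mem_ofPred_eq, Gm_diagonal, posDef_diagonal_iff]

section Diagonal

variable {n : ℕ} (a b : Fin n → ℝ) (α : ℝ) (c f : Fin n → ℝ)

noncomputable def diagDual (p : ℝ × (Fin n → ℝ) × (Fin n → ℝ)) : ℝ :=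
  -(1/2) * ∑ i, c i ^ 2 / (a i + p.1 * b i + 2 * p.2.1 i)
    - (1/4) * ∑ i, (f i + p.2.1 i + p.2.2 i) ^ 2 / p.2.2 i
    - (1/2) * p.1 ^ 2 - α * p.1

noncomputable def ςbar : ℝ := (1/2) * ∑ i, b i - α

noncomputable def decoupledValue : ℝ := ∑ i, (a i / 2 - |c i| - f i) + ςbar b α ^ 2 / 2

variable {a b α c f}

lemma Pd_diagonal_eq {p : ℝ × (Fin n → ℝ) × (Fin n → ℝ)}
    (hg : ∀ i, a i + p.1 * b i + 2 * p.2.1 i ≠ 0) :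
    Pd (diagonal a) (diagonal b) α c f p = diagDual a b α c f p := by
  have hinv : (Gm (diagonal a) (diagonal b) p.1 p.2.1)⁻¹
      = diagonal fun i => (a i + p.1 * b i + 2 * p.2.1 i)⁻¹ := by
    rw [Gm_diagonal]
    refine inv_eq_left_inv ?_
    rw [diagonal_mul_diagonal, ← diagonal_one]
    exact congrArg diagonal (funext fun i => inv_mul_cancel₀ (hg i))
  rw [Pd, diagDual, hinv, dotProduct_diagonal_mulVec_self]
  simp only [div_eq_inv_mul]

lemma Pd_diagonal_eventuallyEq {q : ℝ × (Fin n → ℝ) × (Fin n → ℝ)}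
    (hg : ∀ i, a i + q.1 * b i + 2 * q.2.1 i ≠ 0) :
    Pd (diagonal a) (diagonal b) α c f =ᶠ[𝓝 q] diagDual a b α c f := by
  have hne : ∀ᶠ p in 𝓝 q, ∀ i, a i + p.1 * b i + 2 * p.2.1 i ≠ 0 :=
    Filter.eventually_all.2 fun i =>
      (by fun_prop : Continuous fun p : ℝ × (Fin n → ℝ) × (Fin n → ℝ) =>
        a i + p.1 * b i + 2 * p.2.1 i).continuousAt.eventually_ne (hg i)
  exact hne.mono fun p hp => Pd_diagonal_eq hp

lemma diagDual_le_decoupledValue {p : ℝ × (Fin n → ℝ) × (Fin n → ℝ)}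
    (hg : ∀ i, 0 < a i + p.1 * b i + 2 * p.2.1 i) (hs : ∀ i, 0 < p.2.2 i) :
    diagDual a b α c f p ≤ decoupledValue a b α c f := by
  have h₁ : -(1/2) * ∑ i, c i ^ 2 / (a i + p.1 * b i + 2 * p.2.1 i)
      ≤ ∑ i, ((a i + p.1 * b i + 2 * p.2.1 i) / 2 - |c i|) := by
    rw [Finset.mul_sum]
    exact Finset.sum_le_sum fun i _ => neg_half_mul_sq_div_le (hg i)
  have h₂ : -(1/4) * ∑ i, (f i + p.2.1 i + p.2.2 i) ^ 2 / p.2.2 i ≤ ∑ i, -(f i + p.2.1 i) := by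
    rw [Finset.mul_sum]
    exact Finset.sum_le_sum fun i _ => neg_quarter_mul_sq_div_le (hs i)
  have hsum : ∑ i, ((a i + p.1 * b i + 2 * p.2.1 i) / 2 - |c i|) + ∑ i, -(f i + p.2.1 i)
      = ∑ i, (a i / 2 - |c i| - f i) + p.1 * ((1/2) * ∑ i, b i) := by
    rw [← Finset.sum_add_distrib, Finset.mul_sum, Finset.mul_sum, ← Finset.sum_add_distrib]
    exact Finset.sum_congr rfl fun i _ => by ring
  rw [diagDual, decoupledValue, ςbar]
  nlinarith [sq_nonneg (p.1 - ((1/2) * ∑ i, b i - α))]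

end Diagonal

section Values

variable {n : ℕ} {a b : Fin n → ℝ} {α : ℝ} {c f : Fin n → ℝ}

lemma diagDual_eq_decoupledValue {m : Fin n → ℝ}
    (hG : ∀ i, a i + ςbar b α * b i + 2 * m i = |c i|) (hc : ∀ i, c i ≠ 0)
    (hfm : ∀ i, 0 < f i + m i) :
    diagDual a b α c f (ςbar b α, m, f + m) = decoupledValue a b α c f := by
  have hterm : ∀ i, -(1/2) * (c i ^ 2 / (a i + ςbar b α * b i + 2 * m i))
      - (1/4) * ((f i + m i + (f i + m i)) ^ 2 / (f i + m i))
      = (a i / 2 - |c i| - f i) + ςbar b α * ((1/2) * b i) := by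
    intro i
    have hci : c i ^ 2 / |c i| = |c i| := by
      rw [← sq_abs, sq, mul_div_assoc, div_self (abs_ne_zero.2 (hc i)), mul_one]
    have hfmi : (f i + m i + (f i + m i)) ^ 2 / (f i + m i) = 4 * (f i + m i) := by
      field_simp [(hfm i).ne']
      ring
    rw [hG i, hci, hfmi]
    linarith [hG i]
  simp only [diagDual, decoupledValue, Pi.add_apply, Finset.mul_sum]
  rw [← Finset.sum_sub_distrib, Finset.sum_congr rfl fun i _ => hterm i, Finset.sum_add_distrib,
    ← Finset.mul_sum, ← Finset.mul_sum]
  unfold ςbar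
  ring

lemma sign_mem_Xv : ((fun i => c i / |c i|, 1) : (Fin n → ℝ) × (Fin n → ℝ)) ∈ Xv n := by
  intro i
  have h : abs (c i / |c i|) ≤ 1 := by rw [abs_div, abs_abs]; exact div_self_le_one _
  exact ⟨Or.inr rfl, abs_le.1 h⟩

lemma Pobj_sign_eq_decoupledValue (hc : ∀ i, c i ≠ 0) :
    Pobj (diagonal a) (diagonal b) α c f (fun i => c i / |c i|) 1 = decoupledValue a b α c f := by
  have hsq : ∀ i, (c i / |c i|) ^ 2 = 1 := fun i => by
    rw [div_pow, sq_abs, div_self (pow_ne_zero 2 (hc i))]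
  have hmul : ∀ i, c i * (c i / |c i|) = |c i| := fun i => by
    rw [mul_div_assoc', ← sq, ← sq_abs, sq, mul_div_assoc, div_self (abs_ne_zero.2 (hc i)),
      mul_one]
  rw [Pobj, dotProduct_diagonal_mulVec_self, dotProduct_diagonal_mulVec_self, dotProduct_one]
  simp only [hsq, mul_one, dotProduct, hmul, decoupledValue, ςbar, Finset.sum_sub_distrib,
    ← Finset.sum_div]
  ring

lemma decoupledValue_le_Pobj {m : Fin n → ℝ}
    (hG : ∀ i, a i + ςbar b α * b i + 2 * m i = |c i|) (hm : ∀ i, 0 < m i)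
    (hfm : ∀ i, 0 < f i + m i) {p : (Fin n → ℝ) × (Fin n → ℝ)} (hp : p ∈ Xv n) :
    decoupledValue a b α c f ≤ Pobj (diagonal a) (diagonal b) α c f p.1 p.2 := by
  have hterm : ∑ i, ((a i + ςbar b α * b i) / 2 - |c i| - f i)
      ≤ ∑ i, ((a i + ςbar b α * b i) / 2 * p.1 i ^ 2 - c i * p.1 i - f i * p.2 i) :=
    Finset.sum_le_sum fun i _ => le_primal_term (hG i) (hm i) (hfm i) (hp i).1 (hp i).2
  have hL : ∑ i, ((a i + ςbar b α * b i) / 2 - |c i| - f i)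
      = ∑ i, (a i / 2 - |c i| - f i) + ςbar b α * ((1/2) * ∑ i, b i) := by
    rw [Finset.mul_sum, Finset.mul_sum, ← Finset.sum_add_distrib]
    exact Finset.sum_congr rfl fun i _ => by ring
  have hR : ∑ i, ((a i + ςbar b α * b i) / 2 * p.1 i ^ 2 - c i * p.1 i - f i * p.2 i)
      = (1/2) * ∑ i, a i * p.1 i ^ 2 - c ⬝ᵥ p.1 - f ⬝ᵥ p.2
        + ςbar b α * ((1/2) * ∑ i, b i * p.1 i ^ 2) := by
    simp only [dotProduct, Finset.mul_sum, ← Finset.sum_sub_distrib, ← Finset.sum_add_distrib]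
    exact Finset.sum_congr rfl fun i _ => by ring
  rw [Pobj, dotProduct_diagonal_mulVec_self, dotProduct_diagonal_mulVec_self, decoupledValue]
  have hς : (1/2) * ∑ i, b i = ςbar b α + α := by unfold ςbar; ring
  rw [hL, hR, hς] at hterm
  nlinarith [sq_nonneg ((1/2) * ∑ i, b i * p.1 i ^ 2 - α - ςbar b α)]

end Values

section Derivative

variable {n : ℕ} {a b : Fin n → ℝ} {α : ℝ} {c f : Fin n → ℝ}

lemma hasDerivAt_affine (u v x : ℝ) : HasDerivAt (fun t : ℝ => u + t * v) v x := by
  simpa using ((hasDerivAt_id x).mul_const v).const_add u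

lemma hasDerivAt_diagDual_line {q : ℝ × (Fin n → ℝ) × (Fin n → ℝ)}
    (hg : ∀ i, a i + q.1 * b i + 2 * q.2.1 i ≠ 0) (hs : ∀ i, q.2.2 i ≠ 0)
    (w : ℝ × (Fin n → ℝ) × (Fin n → ℝ)) :
    HasDerivAt (fun t : ℝ => diagDual a b α c f (q + t • w))
      ((1/2) * ∑ i, c i ^ 2 * (w.1 * b i + 2 * w.2.1 i) / (a i + q.1 * b i + 2 * q.2.1 i) ^ 2
        - (1/4) * ∑ i, (2 * (f i + q.2.1 i + q.2.2 i) * (w.2.1 i + w.2.2 i) * q.2.2 i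
            - (f i + q.2.1 i + q.2.2 i) ^ 2 * w.2.2 i) / q.2.2 i ^ 2
        - q.1 * w.1 - α * w.1) 0 := by
  have hline : (fun t : ℝ => diagDual a b α c f (q + t • w)) = fun t =>
      -(1/2) * ∑ i, c i ^ 2 / ((a i + q.1 * b i + 2 * q.2.1 i) + t * (w.1 * b i + 2 * w.2.1 i))
      - (1/4) * ∑ i, ((f i + q.2.1 i + q.2.2 i) + t * (w.2.1 i + w.2.2 i)) ^ 2
          / (q.2.2 i + t * w.2.2 i)
      - (1/2) * (q.1 + t * w.1) ^ 2 - α * (q.1 + t * w.1) := by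
    funext t
    have e₁ : ∀ i, a i + (q.1 + t * w.1) * b i + 2 * (q.2.1 i + t * w.2.1 i)
        = (a i + q.1 * b i + 2 * q.2.1 i) + t * (w.1 * b i + 2 * w.2.1 i) := fun i => by ring
    have e₂ : ∀ i, f i + (q.2.1 i + t * w.2.1 i) + (q.2.2 i + t * w.2.2 i)
        = (f i + q.2.1 i + q.2.2 i) + t * (w.2.1 i + w.2.2 i) := fun i => by ring
    simp only [diagDual, Prod.fst_add, Prod.snd_add, Prod.smul_fst, Prod.smul_snd, Pi.add_apply,
      Pi.smul_apply, smul_eq_mul, e₁, e₂]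
  have h₁ := HasDerivAt.fun_sum (u := Finset.univ) fun i _ =>
    (hasDerivAt_const (0 : ℝ) (c i ^ 2)).fun_div
      (hasDerivAt_affine (a i + q.1 * b i + 2 * q.2.1 i) (w.1 * b i + 2 * w.2.1 i) 0)
      (by simpa using hg i)
  have h₂ := HasDerivAt.fun_sum (u := Finset.univ) fun i _ =>
    ((hasDerivAt_affine (f i + q.2.1 i + q.2.2 i) (w.2.1 i + w.2.2 i) 0).fun_pow 2).fun_div
      (hasDerivAt_affine (q.2.2 i) (w.2.2 i) 0) (by simpa using hs i)
  rw [hline]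
  refine ((((h₁.const_mul (-(1/2) : ℝ)).fun_sub (h₂.const_mul (1/4 : ℝ))).fun_sub
    (((hasDerivAt_affine q.1 w.1 0).fun_pow 2).const_mul (1/2 : ℝ))).fun_sub
    ((hasDerivAt_affine q.1 w.1 0).const_mul α)).congr_deriv ?_
  simp only [zero_mul, add_zero, zero_sub, Nat.cast_ofNat, neg_div, Finset.sum_neg_distrib,
    Nat.reduceSub, pow_one]
  ring

lemma differentiableAt_diagDual {q : ℝ × (Fin n → ℝ) × (Fin n → ℝ)}
    (hg : ∀ i, a i + q.1 * b i + 2 * q.2.1 i ≠ 0) (hs : ∀ i, q.2.2 i ≠ 0) :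
    DifferentiableAt ℝ (diagDual a b α c f) q := by
  unfold diagDual
  fun_prop (disch := simp_all)

lemma fderiv_diagDual_apply {q : ℝ × (Fin n → ℝ) × (Fin n → ℝ)}
    (hg : ∀ i, a i + q.1 * b i + 2 * q.2.1 i ≠ 0) (hs : ∀ i, q.2.2 i ≠ 0)
    (w : ℝ × (Fin n → ℝ) × (Fin n → ℝ)) :
    fderiv ℝ (diagDual a b α c f) q w =
      (1/2) * ∑ i, c i ^ 2 * (w.1 * b i + 2 * w.2.1 i) / (a i + q.1 * b i + 2 * q.2.1 i) ^ 2
        - (1/4) * ∑ i, (2 * (f i + q.2.1 i + q.2.2 i) * (w.2.1 i + w.2.2 i) * q.2.2 i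
            - (f i + q.2.1 i + q.2.2 i) ^ 2 * w.2.2 i) / q.2.2 i ^ 2
        - q.1 * w.1 - α * w.1 := by
  have hline : HasDerivAt (fun t : ℝ => q + t • w) w 0 := by
    simpa using ((hasDerivAt_id (0 : ℝ)).smul_const w).const_add q
  exact ((differentiableAt_diagDual hg hs).hasFDerivAt.comp_hasDerivAt_of_eq 0 hline
    (by simp)).unique (hasDerivAt_diagDual_line hg hs w)

lemma abs_eq_of_fderiv_diagDual_eq_zero {q : ℝ × (Fin n → ℝ) × (Fin n → ℝ)}
    (hg : ∀ i, 0 < a i + q.1 * b i + 2 * q.2.1 i) (hs : ∀ i, 0 < q.2.2 i)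
    (h : fderiv ℝ (diagDual a b α c f) q = 0) {j : Fin n} (hc : c j ≠ 0) :
    a j + q.1 * b j + 2 * q.2.1 j = |c j| ∧ q.2.2 j = f j + q.2.1 j := by
  have hD := fderiv_diagDual_apply (α := α) (c := c) (f := f) (fun i => (hg i).ne')
    (fun i => (hs i).ne')
  have hσ₁ := hD (0, Pi.single j 1, 0)
  have hσ₂ := hD (0, 0, Pi.single j 1)
  rw [h] at hσ₁ hσ₂
  simp only [_root_.zero_apply, one_div, zero_mul, Pi.single_apply, mul_ite, mul_one, mul_zero,
    zero_add, ite_div, zero_div, Finset.sum_ite_eq', Finset.mem_univ, ↓reduceIte, Pi.zero_apply,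
    add_zero, ite_mul, sub_zero, Finset.sum_const_zero, ite_sub_ite, sub_self, zero_sub,
    zero_eq_neg, mul_eq_zero, inv_eq_zero, OfNat.ofNat_ne_zero, div_eq_zero_iff, ne_eq, not_false_eq_true,
    pow_eq_zero_iff, false_or] at hσ₁ hσ₂
  set g := a j + q.1 * b j + 2 * q.2.1 j
  set T := f j + q.2.1 j + q.2.2 j
  have hgj : g ≠ 0 := (hg j).ne'
  have hsj := (hs j).ne'
  have e₁ : 2 * q.2.2 j * c j ^ 2 = T * g ^ 2 := by
    field_simp at hσ₁; linarith
  have e₂ : T * (2 * q.2.2 j - T) = 0 := by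
    field_simp at hσ₂; exact hσ₂.resolve_right hsj
  have hT : T ≠ 0 := fun hT => by
    rw [hT, zero_mul] at e₁
    simp [hsj, hc] at e₁
  have hsT : T = 2 * q.2.2 j := by linarith [(mul_eq_zero.1 e₂).resolve_left hT]
  refine ⟨(pow_left_inj₀ (hg j).le (abs_nonneg _) two_ne_zero).1 ?_, by linarith⟩
  rw [sq_abs]
  rw [hsT] at e₁
  exact (mul_left_cancel₀ (mul_ne_zero two_ne_zero hsj) (by linarith)).symm

lemma fderiv_diagDual_eq_zero_iff (hc : ∀ i, c i ≠ 0) {q : ℝ × (Fin n → ℝ) × (Fin n → ℝ)}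
    (hg : ∀ i, 0 < a i + q.1 * b i + 2 * q.2.1 i) (hs : ∀ i, 0 < q.2.2 i) :
    fderiv ℝ (diagDual a b α c f) q = 0 ↔ q.1 = ςbar b α ∧
      (∀ i, a i + q.1 * b i + 2 * q.2.1 i = |c i|) ∧ ∀ i, q.2.2 i = f i + q.2.1 i := by
  have hD := fderiv_diagDual_apply (α := α) (c := c) (f := f) (fun i => (hg i).ne')
    (fun i => (hs i).ne')
  have hsq_div : ∀ i u, c i ^ 2 * u / c i ^ 2 = u := fun i u =>
    mul_div_cancel_left₀ _ (pow_ne_zero 2 (hc i))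
  constructor
  · intro h
    have hcoord := fun i => abs_eq_of_fderiv_diagDual_eq_zero hg hs h (hc i)
    have hς := hD (1, 0, 0)
    rw [h] at hς
    simp only [_root_.zero_apply, one_div, one_mul, Pi.zero_apply, mul_zero, add_zero, (hcoord _).1,
      sq_abs, hsq_div, zero_mul, sub_self, zero_div, Finset.sum_const_zero, sub_zero, mul_one] at hς
    refine ⟨?_, fun i => (hcoord i).1, fun i => (hcoord i).2⟩
    rw [ςbar]
    linarith
  · rintro ⟨hς, hG, hS⟩
    refine ContinuousLinearMap.ext fun w => ?_
    rw [hD, _root_.zero_apply]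
    have hσ₂ : ∀ i, (2 * (f i + q.2.1 i + q.2.2 i) * (w.2.1 i + w.2.2 i) * q.2.2 i
        - (f i + q.2.1 i + q.2.2 i) ^ 2 * w.2.2 i) / q.2.2 i ^ 2 = 4 * w.2.1 i := fun i => by
      have := (hs i).ne'
      rw [hS i] at this ⊢
      field_simp
      ring
    simp only [hG, sq_abs, hsq_div, hσ₂, Finset.sum_add_distrib, ← Finset.mul_sum]
    rw [hς, ςbar]
    ring

end Derivative

section Critical

variable {n : ℕ} {a b : Fin n → ℝ} {α : ℝ} {c f m : Fin n → ℝ}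

lemma critical_mem_Ssharp (hb : ∀ i, 0 ≤ b i) (hc : ∀ i, c i ≠ 0)
    (hG : ∀ i, a i + ςbar b α * b i + 2 * m i = |c i|) (hm : ∀ i, 0 < m i)
    (hfm : ∀ i, 0 < f i + m i) :
    (ςbar b α, m, f + m) ∈ Ssharp (diagonal a) (diagonal b) α := by
  refine (mem_Ssharp_diagonal_iff a b α _).2
    ⟨?_, fun i => (hm i).le, hfm, fun i => (hG i).symm ▸ abs_pos.2 (hc i)⟩
  have := Finset.sum_nonneg fun i (_ : i ∈ Finset.univ) => hb i
  unfold ςbar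
  linarith

lemma Pd_critical_eq_decoupledValue (hc : ∀ i, c i ≠ 0)
    (hG : ∀ i, a i + ςbar b α * b i + 2 * m i = |c i|) (hfm : ∀ i, 0 < f i + m i) :
    Pd (diagonal a) (diagonal b) α c f (ςbar b α, m, f + m) = decoupledValue a b α c f := by
  rw [Pd_diagonal_eq fun i => (hG i).symm ▸ abs_ne_zero.2 (hc i)]
  exact diagDual_eq_decoupledValue hG hc hfm

lemma Pd_le_decoupledValue {q : ℝ × (Fin n → ℝ) × (Fin n → ℝ)}
    (hq : q ∈ Ssharp (diagonal a) (diagonal b) α) :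
    Pd (diagonal a) (diagonal b) α c f q ≤ decoupledValue a b α c f := by
  obtain ⟨-, -, hs, hg⟩ := (mem_Ssharp_diagonal_iff a b α q).1 hq
  rw [Pd_diagonal_eq fun i => (hg i).ne']
  exact diagDual_le_decoupledValue hg hs

lemma fderiv_Pd_eq_zero_iff (hc : ∀ i, c i ≠ 0)
    (hG : ∀ i, a i + ςbar b α * b i + 2 * m i = |c i|) {q : ℝ × (Fin n → ℝ) × (Fin n → ℝ)}
    (hq : q ∈ Ssharp (diagonal a) (diagonal b) α) :
    fderiv ℝ (Pd (diagonal a) (diagonal b) α c f) q = 0 ↔ q = (ςbar b α, m, f + m) := by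
  obtain ⟨-, -, hs, hg⟩ := (mem_Ssharp_diagonal_iff a b α q).1 hq
  rw [(Pd_diagonal_eventuallyEq fun i => (hg i).ne').fderiv_eq,
    fderiv_diagDual_eq_zero_iff hc hg hs]
  constructor
  · rintro ⟨hς, hq₁, hq₂⟩
    rw [hς] at hq₁
    have hσ : q.2.1 = m := funext fun i => by linarith [hq₁ i, hG i]
    exact Prod.ext hς (Prod.ext hσ (funext fun i => by rw [hq₂ i, hσ]; rfl))
  · rintro rfl
    exact ⟨rfl, hG, fun i => rfl⟩

end Critical

theorem decoupled_problem_general {n : ℕ}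
    (A B : Matrix (Fin n) (Fin n) ℝ)
    (α : ℝ) (c f : Fin n → ℝ)
    (a b : Fin n → ℝ)
    (hA : A = Matrix.diagonal a) (hB : B = Matrix.diagonal b)
    (hb : ∀ i, 0 ≤ b i) (hc : ∀ i, c i ≠ 0)
    (ςb : ℝ) (hςb : ςb = (1/2) * ∑ i, b i - α)
    (mb nb : Fin n → ℝ)
    (hm : ∀ i, mb i = max (-(1/2) * (a i + ςb * b i + c i))
                         (-(1/2) * (a i + ςb * b i - c i)))
    (hnb : ∀ i, nb i = f i + mb i)
    (hmpos : ∀ i, 0 < mb i) (hnpos : ∀ i, 0 < nb i)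
    (xb vb : Fin n → ℝ)
    (hx : ∀ i, xb i = c i / |c i|) (hv : ∀ i, vb i = 1) :
    (ςb, mb, nb) ∈ Ssharp A B α ∧
    fderiv ℝ (Pd A B α c f) (ςb, mb, nb) = 0 ∧
    (∀ q ∈ Ssharp A B α, fderiv ℝ (Pd A B α c f) q = 0 → q = (ςb, mb, nb)) ∧
    (∀ q ∈ Ssharp A B α, Pd A B α c f q ≤ Pd A B α c f (ςb, mb, nb)) ∧
    (xb, vb) ∈ Xv n ∧
    (∀ q ∈ Xv n, Pobj A B α c f xb vb ≤ Pobj A B α c f q.1 q.2) ∧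
    Pobj A B α c f xb vb = Pd A B α c f (ςb, mb, nb) := by
  subst hA hB
  obtain rfl : ςb = ςbar b α := hςb
  obtain rfl : nb = f + mb := funext hnb
  obtain rfl : xb = fun i => c i / |c i| := funext hx
  obtain rfl : vb = 1 := funext hv
  have hG : ∀ i, a i + ςbar b α * b i + 2 * mb i = |c i| := fun i => by
    rw [hm i, max_neg_half_mul_add_sub]; ring
  have hmem := critical_mem_Ssharp hb hc hG hmpos hnpos
  have hval := Pd_critical_eq_decoupledValue (f := f) hc hG hnpos
  refine ⟨hmem, (fderiv_Pd_eq_zero_iff hc hG hmem).2 rfl,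
    fun q hq => (fderiv_Pd_eq_zero_iff hc hG hq).1, fun q hq => hval ▸ Pd_le_decoupledValue hq,
    sign_mem_Xv, fun p hp => ?_, ?_⟩
  · rw [Pobj_sign_eq_decoupledValue hc]
    exact decoupledValue_le_Pobj hG hmpos hnpos hp
  · rw [Pobj_sign_eq_decoupledValue hc, hval]

theorem decoupled_problem {n : ℕ} (hn : 0 < n)
    (A B : Matrix (Fin n) (Fin n) ℝ)
    (α : ℝ) (hα : 0 < α) (c f : Fin n → ℝ)
    (a b : Fin n → ℝ)
    (hA : A = Matrix.diagonal a) (hB : B = Matrix.diagonal b)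
    (hb : ∀ i, 0 ≤ b i) (hc : ∀ i, c i ≠ 0)
    (ςb : ℝ) (hςb : ςb = (1/2) * ∑ i, b i - α)
    (mb nb : Fin n → ℝ)
    (hm : ∀ i, mb i = max (-(1/2) * (a i + ςb * b i + c i))
                         (-(1/2) * (a i + ςb * b i - c i)))
    (hnb : ∀ i, nb i = f i + mb i)
    (hmpos : ∀ i, 0 < mb i) (hnpos : ∀ i, 0 < nb i)
    (xb vb : Fin n → ℝ)
    (hx : ∀ i, xb i = c i / |c i|) (hv : ∀ i, vb i = 1) :
    (ςb, mb, nb) ∈ Ssharp A B α ∧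
    fderiv ℝ (Pd A B α c f) (ςb, mb, nb) = 0 ∧
    (∀ q ∈ Ssharp A B α, fderiv ℝ (Pd A B α c f) q = 0 → q = (ςb, mb, nb)) ∧
    (∀ q ∈ Ssharp A B α, Pd A B α c f q ≤ Pd A B α c f (ςb, mb, nb)) ∧
    (xb, vb) ∈ Xv n ∧
    (∀ q ∈ Xv n, Pobj A B α c f xb vb ≤ Pobj A B α c f q.1 q.2) ∧
    Pobj A B α c f xb vb = Pd A B α c f (ςb, mb, nb) :=
  decoupled_problem_general A B α c f a b hA hB hb hc ςb hςb mb nb hm hnb hmpos hnpos xb vb hx hv
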